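/- (Radford's S⁴ formula for co-Frobenius Hopf algebras.) Let H be a Hopf algebra over a field k with bijective antipode S, and let λ : H → k be a nonzero left integral for H in H⁎. Assume the map H → H⁎, h ↦ λ ↼ h, is injective. Let χ : H → H be a bijective algebra homomorphism satisfying λ(x·h) = λ(χ(h)·x) for all x, h ∈ H, set α := ε ∘ χ (the distinguished grouplike element of H⁎), and let g ∈ H be a grouplike element satisfying λ(h₁)·h₂ = λ(h)·S(g) for all h ∈ H (the distinguished grouplike element of H). Then for every h ∈ H, S⁴(h) = g·(α ⇀ h ↼ α⁻¹)·g⁻¹; explicitly, S⁴(h) = α(S(h₁))·α(h₃)·g·h₂·S(g). -/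

import Mathlib

/-!
Helper definitions for Sweedler-notation expressions in a Hopf algebra `H` over a field `k`.
-/

open TensorProduct

variable {k H : Type*} [Field k] [Ring H] [HopfAlgebra k H]

/-- `swl f h = f(h₁) • h₂` in Sweedler notation. -/
noncomputable def swl (f : H →ₗ[k] k) : H →ₗ[k] H :=
  (TensorProduct.lid k H).toLinearMap ∘ₗ (f.rTensor H) ∘ₗ Coalgebra.comul

/-- `swr f h = f(h₂) • h₁` in Sweedler notation. -/
noncomputable def swr (f : H →ₗ[k] k) : H →ₗ[k] H :=
  (TensorProduct.rid k H).toLinearMap ∘ₗ (f.lTensor H) ∘ₗ Coalgebra.comul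

/-- `sw2 f g h = f(h₁) * g(h₂)`, an element of `H`, in Sweedler notation. -/
noncomputable def sw2 (f g : H →ₗ[k] H) : H →ₗ[k] H :=
  (LinearMap.mul' k H) ∘ₗ (TensorProduct.map f g) ∘ₗ Coalgebra.comul

/-- `sw2k f g h = f(h₁) * g(h₂)`, a scalar, in Sweedler notation. -/
noncomputable def sw2k (f g : H →ₗ[k] k) : H →ₗ[k] k :=
  (LinearMap.mul' k k) ∘ₗ (TensorProduct.map f g) ∘ₗ Coalgebra.comul

/-- `comul3 h = (h₁ ⊗ h₂) ⊗ h₃`, the iterated comultiplication `(Δ ⊗ id)Δ`. -/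
noncomputable def comul3 : H →ₗ[k] (H ⊗[k] H) ⊗[k] H :=
  (LinearMap.rTensor H Coalgebra.comul) ∘ₗ Coalgebra.comul

/-- `sw3 f g e h = f(h₁) * g(h₂) * e(h₃)`, an element of `H`, in Sweedler notation. -/
noncomputable def sw3 (f g e : H →ₗ[k] H) : H →ₗ[k] H :=
  (LinearMap.mul' k H) ∘ₗ
    (TensorProduct.map ((LinearMap.mul' k H) ∘ₗ TensorProduct.map f g) e) ∘ₗ comul3

/-!
The Nakayama automorphism `χ` of `λ` has two descriptions of its comultiplication,
`χ(h)₁ ⊗ g χ(h)₂ S(g) = χ(h₁) ⊗ S²(h₂)` and `S²(χ(h)₁) ⊗ χ(h)₂ = h₁ ⊗ χ(h₂)`. Each is checked after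
pairing one tensor leg with the functionals `λ(· x)`, which separate points by the injectivity of
`h ↦ λ ↼ h`; what remains are the integral identities `x₁ λ(c x₂) = S(c₁) λ(c₂ x)` and
`λ(c₁ x) c₂ = λ(c x₁) S(g) S(x₂)`, which follow from `S(c₁)c₂ ⊗ c₃ = 1 ⊗ c` and
`c₁ ⊗ c₂S(c₃) = c ⊗ 1`.
Applying `ε` to a leg gives `g χ(h) S(g) = S²(α(h₁) h₂)` and `S²(χ h) = α(h₂) h₁`. In the
convolution algebra of linear maps `H → H`, with `α` acting as `η ∘ α`, these say
`α * S⁴ = c_g * α` for `c_g y = g y S(g)`; convolving on the left with `α ∘ S = α⁻¹` gives the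
formula.
-/

open Coalgebra HopfAlgebra WithConv

namespace TensorProduct

section Pairing
variable {R M N : Type*} [CommSemiring R] [AddCommMonoid M] [Module R M] [AddCommMonoid N]
  [Module R N]

lemma apply_rid_lTensor_eq_apply_lid_rTensor (f : M →ₗ[R] R) (φ : N →ₗ[R] R) (w : M ⊗[R] N) :
    f (TensorProduct.rid R M (φ.lTensor M w)) = φ (TensorProduct.lid R N (f.rTensor N w)) := by
  induction w using TensorProduct.induction_on with
  | zero => simp
  | tmul m n => simp [mul_comm]
  | add w w' hw hw' => simp [hw, hw']

lemma eq_zero_of_forall_lid_rTensor_eq_zero [Module.Free R N] {ι : Type*}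
    (f : ι → M →ₗ[R] R) (hf : ∀ m, (∀ i, f i m = 0) → m = 0) {w : M ⊗[R] N}
    (hw : ∀ i, TensorProduct.lid R N ((f i).rTensor N w) = 0) : w = 0 := by
  classical
  let b := Module.Free.chooseBasis R N
  apply (equivFinsuppOfBasisRight b).injective
  ext j
  rw [equivFinsuppOfBasisRight_apply, map_zero, Finsupp.zero_apply]
  exact hf _ fun i ↦ by rw [apply_rid_lTensor_eq_apply_lid_rTensor, hw, map_zero]

lemma eq_zero_of_forall_rid_lTensor_eq_zero [Module.Free R M] {ι : Type*}
    (f : ι → N →ₗ[R] R) (hf : ∀ n, (∀ i, f i n = 0) → n = 0) {w : M ⊗[R] N}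
    (hw : ∀ i, TensorProduct.rid R M ((f i).lTensor M w) = 0) : w = 0 := by
  classical
  let b := Module.Free.chooseBasis R M
  apply (equivFinsuppOfBasisLeft b).injective
  ext j
  rw [equivFinsuppOfBasisLeft_apply, map_zero, Finsupp.zero_apply]
  exact hf _ fun i ↦ by rw [← apply_rid_lTensor_eq_apply_lid_rTensor, hw, map_zero]

end Pairing

section Algebra
variable {R A : Type*} [CommSemiring R] [Semiring A] [Algebra R A]

lemma rid_lTensor_tmul_one_mul (f : A →ₗ[R] R) (a : A) (w : A ⊗[R] A) :
    TensorProduct.rid R A (f.lTensor A ((a ⊗ₜ 1) * w)) =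
      a * TensorProduct.rid R A (f.lTensor A w) := by
  induction w using TensorProduct.induction_on with
  | zero => simp
  | tmul x y => simp
  | add w w' hw hw' => simp [mul_add, hw, hw']

lemma rid_lTensor_one_tmul_mul (f : A →ₗ[R] R) (c : A) (w : A ⊗[R] A) :
    TensorProduct.rid R A (f.lTensor A ((1 ⊗ₜ c) * w)) =
      TensorProduct.rid R A ((f ∘ₗ LinearMap.mulLeft R c).lTensor A w) := by
  induction w using TensorProduct.induction_on with
  | zero => simp
  | tmul x y => simp
  | add w w' hw hw' => simp [mul_add, hw, hw']

lemma lid_rTensor_mul_one_tmul (f : A →ₗ[R] R) (a : A) (w : A ⊗[R] A) :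
    TensorProduct.lid R A (f.rTensor A (w * (1 ⊗ₜ a))) =
      TensorProduct.lid R A (f.rTensor A w) * a := by
  induction w using TensorProduct.induction_on with
  | zero => simp
  | tmul x y => simp
  | add w w' hw hw' => simp [add_mul, hw, hw']

lemma lid_rTensor_mul_tmul_one (f : A →ₗ[R] R) (x : A) (w : A ⊗[R] A) :
    TensorProduct.lid R A (f.rTensor A (w * (x ⊗ₜ 1))) =
      TensorProduct.lid R A ((f ∘ₗ LinearMap.mulRight R x).rTensor A w) := by
  induction w using TensorProduct.induction_on with
  | zero => simp
  | tmul x y => simp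
  | add w w' hw hw' => simp [add_mul, hw, hw']

end Algebra

section Map
variable {R M N M' N' : Type*} [CommSemiring R] [AddCommMonoid M] [Module R M]
  [AddCommMonoid N] [Module R N] [AddCommMonoid M'] [Module R M'] [AddCommMonoid N'] [Module R N']

lemma lid_rTensor_map (f : M' →ₗ[R] R) (u : M →ₗ[R] M') (v : N →ₗ[R] N') (w : M ⊗[R] N) :
    TensorProduct.lid R N' (f.rTensor N' (map u v w)) =
      v (TensorProduct.lid R N ((f ∘ₗ u).rTensor N w)) := by
  induction w using TensorProduct.induction_on with
  | zero => simp
  | tmul x y => simp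
  | add w w' hw hw' => simp only [map_add, hw, hw']

lemma rid_lTensor_map (f : N' →ₗ[R] R) (u : M →ₗ[R] M') (v : N →ₗ[R] N') (w : M ⊗[R] N) :
    TensorProduct.rid R M' (f.lTensor M' (map u v w)) =
      u (TensorProduct.rid R M ((f ∘ₗ v).lTensor M w)) := by
  induction w using TensorProduct.induction_on with
  | zero => simp
  | tmul x y => simp
  | add w w' hw hw' => simp only [map_add, hw, hw']

end Map

end TensorProduct

namespace HopfAlgebra

open Algebra.TensorProduct (includeLeft includeRight)

variable {A : Type*} [Semiring A] [Algebra k A]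

lemma toConv_comp_antipode_mul_toConv (f : H →ₐ[k] A) :
    toConv (f.toLinearMap ∘ₗ antipode k) * toConv f.toLinearMap = 1 := by
  have := LinearMap.algHom_comp_convMul_distrib f (toConv (antipode k)) (toConv LinearMap.id)
  rw [LinearMap.antipode_mul_id] at this
  ext c
  simpa using congr($this.symm c)

lemma toConv_mul_toConv_comp_antipode (f : H →ₐ[k] A) :
    toConv f.toLinearMap * toConv (f.toLinearMap ∘ₗ antipode k) = 1 := by
  have := LinearMap.algHom_comp_convMul_distrib f (toConv LinearMap.id) (toConv (antipode k))
  rw [LinearMap.id_mul_antipode] at this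
  ext c
  simpa using congr($this.symm c)

lemma toConv_comul_eq_includeLeft_mul_includeRight :
    toConv (comul (R := k) (A := H)) =
      toConv (includeLeft : H →ₐ[k] H ⊗[k] H).toLinearMap *
        toConv (includeRight : H →ₐ[k] H ⊗[k] H).toLinearMap := by
  ext c
  rw [(ℛ k c).convMul_apply, ← (ℛ k c).eq]
  simp

lemma sum_antipode_tmul_one_mul_comul {c : H} {ι : Type*} (r : Repr k c ι) :
    ∑ i ∈ r.index, (antipode k (r.left i) ⊗ₜ[k] (1 : H)) * comul (r.right i) = 1 ⊗ₜ c := by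
  have : toConv ((includeLeft : H →ₐ[k] H ⊗[k] H).toLinearMap ∘ₗ antipode k) *
      toConv (comul (R := k) (A := H)) = toConv (includeRight : H →ₐ[k] H ⊗[k] H).toLinearMap := by
    rw [toConv_comul_eq_includeLeft_mul_includeRight, ← mul_assoc,
      toConv_comp_antipode_mul_toConv, one_mul]
  simpa [r.convMul_apply] using congr($this c)

lemma sum_comul_mul_one_tmul_antipode {c : H} {ι : Type*} (r : Repr k c ι) :
    ∑ i ∈ r.index, comul (r.left i) * ((1 : H) ⊗ₜ[k] antipode k (r.right i)) = c ⊗ₜ 1 := by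
  have : toConv (comul (R := k) (A := H)) *
      toConv ((includeRight : H →ₐ[k] H ⊗[k] H).toLinearMap ∘ₗ antipode k) =
      toConv (includeLeft : H →ₐ[k] H ⊗[k] H).toLinearMap := by
    rw [toConv_comul_eq_includeLeft_mul_includeRight, mul_assoc,
      toConv_mul_toConv_comp_antipode, mul_one]
  simpa [r.convMul_apply] using congr($this c)

end HopfAlgebra

lemma swl_apply (f : H →ₗ[k] k) (h : H) :
    swl f h = TensorProduct.lid k H (f.rTensor H (comul h)) := rfl

lemma swr_apply (f : H →ₗ[k] k) (h : H) :
    swr f h = TensorProduct.rid k H (f.lTensor H (comul h)) := rfl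

lemma swl_eq_sum (f : H →ₗ[k] k) {h : H} {ι : Type*} (r : Repr k h ι) :
    swl f h = ∑ i ∈ r.index, f (r.left i) • r.right i := by
  simp [swl_apply, ← r.eq, map_sum]

lemma swr_eq_sum (f : H →ₗ[k] k) {h : H} {ι : Type*} (r : Repr k h ι) :
    swr f h = ∑ i ∈ r.index, f (r.right i) • r.left i := by
  simp [swr_apply, ← r.eq, map_sum]

lemma toConv_algebraMap_comp_mul_toConv (f : H →ₗ[k] k) (Φ : H →ₗ[k] H) :
    toConv (Algebra.linearMap k H ∘ₗ f) * toConv Φ = toConv (Φ ∘ₗ swl f) := by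
  ext c
  rw [(ℛ k c).convMul_apply]
  simp [swl, ← (ℛ k c).eq, map_sum, Algebra.algebraMap_eq_smul_one]

lemma toConv_mul_toConv_algebraMap_comp (Φ : H →ₗ[k] H) (f : H →ₗ[k] k) :
    toConv Φ * toConv (Algebra.linearMap k H ∘ₗ f) = toConv (Φ ∘ₗ swr f) := by
  ext c
  rw [(ℛ k c).convMul_apply]
  simp [swr, ← (ℛ k c).eq, map_sum, Algebra.algebraMap_eq_smul_one]

lemma sw3_eq_ofConv_mul (f g e : H →ₗ[k] H) :
    sw3 f g e = (toConv f * toConv g * toConv e).ofConv := by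
  simp only [sw3, comul3, LinearMap.convMul_def, ofConv_toConv, LinearMap.comp_assoc,
    ← LinearMap.comp_assoc _ (LinearMap.rTensor H comul), LinearMap.map_comp_rTensor]

namespace HopfAlgebra

open LinearMap TensorProduct

variable {lam : H →ₗ[k] k} {χ : H →ₐ[k] H} {g : H}

lemma swr_comp_mulLeft_eq_antipode_swr (hlaml : ∀ h : H, swr lam h = lam h • (1 : H))
    (c x : H) : swr (lam ∘ₗ mulLeft k c) x = antipode k (swr (lam ∘ₗ mulRight k x) c) := by
  let r := ℛ k c
  calc swr (lam ∘ₗ mulLeft k c) x = TensorProduct.rid k H (lam.lTensor H ((1 ⊗ₜ c) * comul x)) :=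
        (rid_lTensor_one_tmul_mul lam c _).symm
    _ = ∑ i ∈ r.index, antipode k (r.left i) * swr lam (r.right i * x) := by
        rw [← sum_antipode_tmul_one_mul_comul r, Finset.sum_mul, map_sum, map_sum]
        simp_rw [mul_assoc, ← Bialgebra.comul_mul, rid_lTensor_tmul_one_mul, swr_apply]
    _ = antipode k (swr (lam ∘ₗ mulRight k x) c) := by
        simp [hlaml, swr_eq_sum _ r, map_sum]

lemma swl_comp_mulRight_eq_mul_antipode_swl
    (hglam : ∀ h : H, swl lam h = lam h • antipode k g) (c x : H) :
    swl (lam ∘ₗ mulRight k x) c = antipode k g * antipode k (swl (lam ∘ₗ mulLeft k c) x) := by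
  let r := ℛ k x
  calc swl (lam ∘ₗ mulRight k x) c = TensorProduct.lid k H (lam.rTensor H (comul c * (x ⊗ₜ 1))) :=
        (lid_rTensor_mul_tmul_one lam x _).symm
    _ = ∑ i ∈ r.index, swl lam (c * r.left i) * antipode k (r.right i) := by
        rw [← sum_comul_mul_one_tmul_antipode r, Finset.mul_sum, map_sum, map_sum]
        simp_rw [← mul_assoc, ← Bialgebra.comul_mul, lid_rTensor_mul_one_tmul, swl_apply]
    _ = antipode k g * antipode k (swl (lam ∘ₗ mulLeft k c) x) := by
        simp [hglam, swl_eq_sum _ r, map_sum, Finset.mul_sum]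

lemma eq_zero_of_forall_comp_mulRight_eq_zero
    (hinj : Function.Injective (fun h : H => lam ∘ₗ mulLeft k h)) (v : H)
    (hv : ∀ x, (lam ∘ₗ mulRight k x) v = 0) : v = 0 :=
  hinj <| LinearMap.ext fun x ↦ by simpa using hv x

lemma comp_mulLeft_nakayama (hχ : ∀ x h : H, lam (x * h) = lam (χ h * x)) (h : H) :
    lam ∘ₗ mulLeft k (χ h) = lam ∘ₗ mulRight k h :=
  LinearMap.ext fun y ↦ (hχ y h).symm

lemma comp_mulRight_comp_nakayama (hχ : ∀ x h : H, lam (x * h) = lam (χ h * x)) (x : H) :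
    (lam ∘ₗ mulRight k x) ∘ₗ χ.toLinearMap = lam ∘ₗ mulLeft k x :=
  LinearMap.ext fun y ↦ (hχ x y).symm

lemma map_id_conj_comul_nakayama (hg : IsGroupLikeElem k g)
    (hinj : Function.Injective (fun h : H => lam ∘ₗ mulLeft k h))
    (hχ : ∀ x h : H, lam (x * h) = lam (χ h * x))
    (hglam : ∀ h : H, swl lam h = lam h • antipode k g) (h : H) :
    map LinearMap.id (mulRight k (antipode k g) ∘ₗ mulLeft k g) (comul (χ h)) =
      map χ.toLinearMap (antipode k ∘ₗ antipode k) (comul h) := by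
  rw [← sub_eq_zero]
  refine eq_zero_of_forall_lid_rTensor_eq_zero _ (eq_zero_of_forall_comp_mulRight_eq_zero hinj)
    fun x ↦ ?_
  rw [map_sub, map_sub, sub_eq_zero, lid_rTensor_map, lid_rTensor_map,
    comp_id, comp_mulRight_comp_nakayama hχ, ← swl_apply, ← swl_apply,
    swl_comp_mulRight_eq_mul_antipode_swl hglam, comp_mulLeft_nakayama hχ,
    swl_comp_mulRight_eq_mul_antipode_swl hglam]
  simp [antipode_mul_antidistrib, mul_assoc, hg, ← mul_assoc g (antipode k g)]

lemma map_antipode_sq_id_comul_nakayama (hlaml : ∀ h : H, swr lam h = lam h • (1 : H))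
    (hinj : Function.Injective (fun h : H => lam ∘ₗ mulLeft k h))
    (hχ : ∀ x h : H, lam (x * h) = lam (χ h * x)) (h : H) :
    map (antipode k ∘ₗ antipode k) LinearMap.id (comul (χ h)) =
      map LinearMap.id χ.toLinearMap (comul h) := by
  rw [← sub_eq_zero]
  refine eq_zero_of_forall_rid_lTensor_eq_zero _ (eq_zero_of_forall_comp_mulRight_eq_zero hinj)
    fun x ↦ ?_
  rw [map_sub, map_sub, sub_eq_zero, rid_lTensor_map, rid_lTensor_map, comp_id,
    comp_mulRight_comp_nakayama hχ, ← swr_apply, ← swr_apply, comp_apply,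
    ← swr_comp_mulLeft_eq_antipode_swr hlaml, comp_mulLeft_nakayama hχ,
    ← swr_comp_mulLeft_eq_antipode_swr hlaml, id_apply]

lemma conj_nakayama_eq_antipode_sq_swl (hg : IsGroupLikeElem k g)
    (hinj : Function.Injective (fun h : H => lam ∘ₗ mulLeft k h))
    (hχ : ∀ x h : H, lam (x * h) = lam (χ h * x))
    (hglam : ∀ h : H, swl lam h = lam h • antipode k g) (h : H) :
    g * χ h * antipode k g = antipode k (antipode k (swl (counit ∘ₗ χ.toLinearMap) h)) := by
  have := congr(TensorProduct.lid k H (counit.rTensor H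
    $(map_id_conj_comul_nakayama hg hinj hχ hglam h)))
  rwa [lid_rTensor_map, lid_rTensor_map, comp_id, Coalgebra.rTensor_counit_comul,
    TensorProduct.lid_tmul, one_smul, ← swl_apply] at this

lemma antipode_sq_nakayama_eq_swr (hlaml : ∀ h : H, swr lam h = lam h • (1 : H))
    (hinj : Function.Injective (fun h : H => lam ∘ₗ mulLeft k h))
    (hχ : ∀ x h : H, lam (x * h) = lam (χ h * x)) (h : H) :
    antipode k (antipode k (χ h)) = swr (counit ∘ₗ χ.toLinearMap) h := by
  have := congr(TensorProduct.rid k H (counit.lTensor H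
    $(map_antipode_sq_id_comul_nakayama hlaml hinj hχ h)))
  rwa [rid_lTensor_map, rid_lTensor_map, comp_id, Coalgebra.lTensor_counit_comul,
    TensorProduct.rid_tmul, one_smul, ← swr_apply] at this

end HopfAlgebra

theorem statement10_general
    (lam : H →ₗ[k] k)
    (hlaml : ∀ h : H, swr lam h = lam h • (1 : H))
    (hinj : Function.Injective (fun h : H => lam ∘ₗ LinearMap.mulLeft k h))
    (χ : H →ₐ[k] H)
    (hχ : ∀ x h : H, lam (x * h) = lam (χ h * x))
    (g : H) (hg : Coalgebra.comul (R := k) g = g ⊗ₜ[k] g)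
    (hgε : Coalgebra.counit (R := k) g = 1)
    (hglam : ∀ h : H, swl lam h = lam h • HopfAlgebra.antipode (R := k) g) :
    ∀ h : H,
      HopfAlgebra.antipode (R := k) (HopfAlgebra.antipode (R := k)
        (HopfAlgebra.antipode (R := k) (HopfAlgebra.antipode (R := k) h))) =
      sw3 ((Algebra.linearMap k H) ∘ₗ (Coalgebra.counit (R := k) ∘ₗ χ.toLinearMap) ∘ₗ
            HopfAlgebra.antipode (R := k))
        ((LinearMap.mulRight k (HopfAlgebra.antipode (R := k) g)) ∘ₗ (LinearMap.mulLeft k g))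
        ((Algebra.linearMap k H) ∘ₗ (Coalgebra.counit (R := k) ∘ₗ χ.toLinearMap)) h := by
  have hg : IsGroupLikeElem k g := ⟨hgε, hg⟩
  set α : H →ₗ[k] k := counit ∘ₗ χ.toLinearMap
  set conj : H →ₗ[k] H := LinearMap.mulRight k (antipode k g) ∘ₗ LinearMap.mulLeft k g
  have hα : toConv (Algebra.linearMap k H ∘ₗ α ∘ₗ antipode k) *
      toConv (Algebra.linearMap k H ∘ₗ α) = 1 :=
    toConv_comp_antipode_mul_toConv ((Algebra.ofId k H).comp ((Bialgebra.counitAlgHom k H).comp χ))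
  have key : toConv (Algebra.linearMap k H ∘ₗ α) *
      toConv (antipode k ∘ₗ antipode k ∘ₗ antipode k ∘ₗ antipode k) =
      toConv conj * toConv (Algebra.linearMap k H ∘ₗ α) := by
    rw [toConv_algebraMap_comp_mul_toConv, toConv_mul_toConv_algebraMap_comp]
    ext h
    simp only [LinearMap.comp_apply]
    rw [← conj_nakayama_eq_antipode_sq_swl hg hinj hχ hglam,
      ← antipode_sq_nakayama_eq_swr hlaml hinj hχ]
    simp [conj, antipode_mul_antidistrib, hg, mul_assoc]
  intro h
  rw [sw3_eq_ofConv_mul, mul_assoc, ← key, ← mul_assoc, hα, one_mul]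
  rfl

/-- Radford's `S⁴` formula for co-Frobenius Hopf algebras.
`H` Hopf algebra over `k` with bijective antipode `S`, `λ ≠ 0` a left integral for `H`
in `H⁎` with `h ↦ λ ↼ h` injective, `χ` a bijective algebra endomorphism with
`λ(x·h) = λ(χ(h)·x)`, `α := ε ∘ χ`, and `g` grouplike with `λ(h₁)·h₂ = λ(h)·S(g)`.
Then for all `h`, `S⁴(h) = α(S(h₁))·α(h₃)·g·h₂·S(g)` (i.e. `S⁴(h) = g(α ⇀ h ↼ α⁻¹)g⁻¹`). -/
theorem statement10
    (hS : Function.Bijective ⇑(HopfAlgebra.antipode (R := k) (A := H)))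
    (lam : H →ₗ[k] k) (hlam0 : lam ≠ 0)
    (hlaml : ∀ h : H, swr lam h = lam h • (1 : H))
    (hinj : Function.Injective (fun h : H => lam ∘ₗ LinearMap.mulLeft k h))
    (χ : H →ₐ[k] H) (hχbij : Function.Bijective ⇑χ)
    (hχ : ∀ x h : H, lam (x * h) = lam (χ h * x))
    (g : H) (hg : Coalgebra.comul (R := k) g = g ⊗ₜ[k] g)
    (hgε : Coalgebra.counit (R := k) g = 1)
    (hglam : ∀ h : H, swl lam h = lam h • HopfAlgebra.antipode (R := k) g) :
    ∀ h : H,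
      HopfAlgebra.antipode (R := k) (HopfAlgebra.antipode (R := k)
        (HopfAlgebra.antipode (R := k) (HopfAlgebra.antipode (R := k) h))) =
      sw3 ((Algebra.linearMap k H) ∘ₗ (Coalgebra.counit (R := k) ∘ₗ χ.toLinearMap) ∘ₗ
            HopfAlgebra.antipode (R := k))
        ((LinearMap.mulRight k (HopfAlgebra.antipode (R := k) g)) ∘ₗ (LinearMap.mulLeft k g))
        ((Algebra.linearMap k H) ∘ₗ (Coalgebra.counit (R := k) ∘ₗ χ.toLinearMap)) h :=
  statement10_general lam hlaml hinj χ hχ g hg hgε hglam
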